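/- The reflexive digraph H_4, with vertices {x1,x2,x3,x4}, all loops, symmetric arcs between x1,x3 and between x3,x4 and between x1,x4, single arcs x2x1 and x3x2 (but not their reverses), and no arcs between x2 and x4, does not admit a Min-Max ordering. -/

import Mathlib

/-- `lt` is a Min-Max ordering of the digraph with arc relation `A`. -/
def IsMinMaxOrdering {V : Type*} (A : V → V → Prop) (lt : V → V → Prop) : Prop :=
  IsStrictTotalOrder V lt ∧
    ∀ i j s r : V, lt i j → lt s r → A i r → A j s → A i s ∧ A j r

/-- The digraph with arc relation `A` admits a Min-Max ordering. -/
def HasMinMaxOrdering {V : Type*} (A : V → V → Prop) : Prop :=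
  ∃ lt : V → V → Prop, IsMinMaxOrdering A lt

/-- The reflexive digraph $H_4$ on $x_1,x_2,x_3,x_4$ (identified with 0,1,2,3):
all loops, symmetric arcs $x_1x_3, x_3x_4, x_1x_4$, single arcs $x_2x_1$ and $x_3x_2$,
and no arcs between $x_2$ and $x_4$. -/
def H4 : Fin 4 → Fin 4 → Prop := fun a b =>
  a = b ∨ (a, b) ∈
    ({(0,2),(2,0),(2,3),(3,2),(0,3),(3,0),(1,0),(2,1)} : Set (Fin 4 × Fin 4))

/-!
The vertices $x_1, x_3, x_2$ form a directed triangle $x_1 \to x_3 \to x_2 \to x_1$ whose reverse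
arcs $x_1x_2$ and $x_2x_3$ are missing. In a Min-Max ordering, the loop at a vertex lying strictly
between the ends of an arc $uv$ forces arcs from $u$ to it and from it to $v$. Whichever vertex of
the triangle lies between the other two, this produces one of the missing arcs.
-/

variable {V : Type*} {A lt : V → V → Prop}

theorem IsMinMaxOrdering.arc_of_between (h : IsMinMaxOrdering A lt) {u v w : V}
    (hw : A w w) (huv : A u v) (hbtw : lt u w ∧ lt w v ∨ lt v w ∧ lt w u) :
    A u w ∧ A w v := by
  rcases hbtw with ⟨huw, hwv⟩ | ⟨hvw, hwu⟩
  · exact h.2 u w w v huw hwv huv hw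
  · exact (h.2 w u v w hwu hvw hw huv).symm

theorem not_hasMinMaxOrdering_of_triangle {a b c : V} (ha : A a a) (hb : A b b) (hc : A c c)
    (hab : A a b) (hbc : A b c) (hca : A c a) (hac : ¬ A a c) (hcb : ¬ A c b) :
    ¬ HasMinMaxOrdering A := by
  classical
  rintro ⟨lt, h⟩
  have : IsStrictTotalOrder V lt := h.1
  let := linearOrderOfSTO lt
  have hne_ab : a ≠ b := by rintro rfl; exact hcb hca
  have hne_bc : b ≠ c := by rintro rfl; exact hcb hc
  have hne_ac : a ≠ c := by rintro rfl; exact hac ha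
  by_cases hb_mid : c < b ∧ b < a ∨ a < b ∧ b < c
  · exact hcb (h.arc_of_between hb hca hb_mid).1
  by_cases ha_mid : b < a ∧ a < c ∨ c < a ∧ a < b
  · exact hac (h.arc_of_between ha hbc ha_mid).2
  have hc_mid : a < c ∧ c < b ∨ b < c ∧ c < a := by
    rcases lt_trichotomy a b with h1 | h1 | h1 <;>
    rcases lt_trichotomy b c with h2 | h2 | h2 <;>
    rcases lt_trichotomy a c with h3 | h3 | h3 <;>
    tauto
  exact hac (h.arc_of_between hc hab hc_mid).1

theorem stmt11 : ¬ HasMinMaxOrdering H4 :=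
  not_hasMinMaxOrdering_of_triangle (a := 0) (b := 2) (c := 1)
    (by simp [H4]) (by simp [H4]) (by simp [H4]) (by simp [H4]) (by simp [H4]) (by simp [H4])
    (by simp [H4]) (by simp [H4])
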